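/- For all integers k ≥ m ≥ 1, lim_{T→∞} (1/(1 − e^{−T})) · ∫_0^T C(k−1, m−1) · e^{−y} · e^{−my/2} · (1 − e^{−y/2})^{k−m} dy = m(m+1) · B(k, 3) = 2m(m+1) / (k(k+1)(k+2)), where C(k−1,m−1) is a binomial coefficient and B(a,b) = Γ(a)Γ(b)/Γ(a+b) is the Beta function. -/

import Mathlib

/-!
Substituting `x = e^{-y/2}` turns the integrand into `2 x^{m+1} (1 - x)^{k-m} dx` on
`[e^{-T/2}, 1]`, so as `T → ∞` the integral tends to the Beta integral
`2 B(m+2, k-m+1) = 2 (m+1)! (k-m)! / (k+2)!`, while the normalisation `1 / (1 - e^{-T})` tends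
to `1`. Multiplying by `C(k-1, m-1)` and cancelling factorials gives `2m(m+1)/(k(k+1)(k+2))`,
which is `m(m+1) Γ(k)Γ(3)/Γ(k+3)` by the functional equation of `Γ`.
-/

open Filter Topology Real Set
open scoped Nat

theorem integral_pow_mul_one_sub_pow (a b : ℕ) :
    ∫ x in (0 : ℝ)..1, x ^ a * (1 - x) ^ b = (a ! * b ! / (a + b + 1)! : ℝ) := by
  have hbeta := Complex.betaIntegral_eq_Gamma_mul_div (a + 1) (b + 1)
    (by simp; positivity) (by simp; positivity)
  have hsum : ((a : ℂ) + 1 + (b + 1)) = ((a + b + 1 : ℕ) : ℂ) + 1 := by push_cast; ring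
  rw [hsum, Complex.Gamma_nat_eq_factorial, Complex.Gamma_nat_eq_factorial,
    Complex.Gamma_nat_eq_factorial, Complex.betaIntegral] at hbeta
  simp only [add_sub_cancel_right, Complex.cpow_natCast] at hbeta
  have hC : ((∫ x in (0 : ℝ)..1, x ^ a * (1 - x) ^ b : ℝ) : ℂ) =
      (a ! * b ! / (a + b + 1)! : ℝ) := by
    rw [← intervalIntegral.integral_ofReal]
    push_cast
    exact hbeta
  exact_mod_cast hC

theorem Gamma_mul_Gamma_three_div_Gamma_add_three {s : ℝ} (hs : ∀ n : ℕ, s ≠ -n) :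
    Gamma s * Gamma 3 / Gamma (s + 3) = 2 / (s * (s + 1) * (s + 2)) := by
  have h0 : s ≠ 0 := by simpa using hs 0
  have h1 : s + 1 ≠ 0 := fun h => hs 1 (by push_cast; linarith)
  have h2 : s + 2 ≠ 0 := fun h => hs 2 (by push_cast; linarith)
  have hΓ3 : Gamma 3 = 2 := by
    rw [show (3 : ℝ) = (2 : ℕ) + 1 by norm_num, Gamma_nat_eq_factorial]; norm_num
  rw [show s + 3 = s + 2 + 1 by ring, Gamma_add_one h2, show s + 2 = s + 1 + 1 by ring,
    Gamma_add_one h1, Gamma_add_one h0, hΓ3]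
  field_simp [Gamma_ne_zero hs]

theorem integral_comp_exp_neg_mul_mul_exp {c : ℝ} (hc : c ≠ 0) {g : ℝ → ℝ}
    (hg : Continuous g) (T : ℝ) :
    ∫ y in (0 : ℝ)..T, g (exp (-(c * y))) * exp (-(c * y)) =
      c⁻¹ * ∫ x in exp (-(c * T))..1, g x := by
  have hderiv : ∀ y ∈ uIcc 0 T,
      HasDerivAt (fun y => exp (-(c * y))) (-c * exp (-(c * y))) y := fun y _ => by
    simpa [mul_comm] using ((hasDerivAt_id y).const_mul c).neg.exp
  have hsubst := intervalIntegral.integral_comp_mul_deriv hderiv (by fun_prop) hg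
  simp only [Function.comp_def, mul_zero, neg_zero, exp_zero] at hsubst
  rw [intervalIntegral.integral_symm 1, ← hsubst, ← intervalIntegral.integral_neg,
    ← intervalIntegral.integral_const_mul]
  congr 1 with y
  field_simp

theorem tendsto_integral_comp_exp_neg_mul_mul_exp {c : ℝ} (hc : 0 < c) {g : ℝ → ℝ}
    (hg : Continuous g) :
    Tendsto (fun T => ∫ y in (0 : ℝ)..T, g (exp (-(c * y))) * exp (-(c * y))) atTop
      (𝓝 (c⁻¹ * ∫ x in (0 : ℝ)..1, g x)) := by
  simp_rw [integral_comp_exp_neg_mul_mul_exp hc.ne' hg]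
  have hexp : Tendsto (fun T => exp (-(c * T))) atTop (𝓝 0) :=
    tendsto_exp_neg_atTop_nhds_zero.comp (tendsto_id.const_mul_atTop hc)
  have hprim : Continuous fun u => ∫ x in u..1, g x := by
    simp_rw [intervalIntegral.integral_symm 1]
    exact (intervalIntegral.continuous_primitive (fun _ _ => hg.intervalIntegrable _ _) 1).neg
  exact ((hprim.tendsto 0).comp hexp).const_mul _

theorem tendsto_one_div_one_sub_exp_neg : Tendsto (fun T => 1 / (1 - exp (-T))) atTop (𝓝 1) := by
  simpa using (tendsto_exp_neg_atTop_nhds_zero.const_sub 1).inv₀ (by norm_num)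

theorem cast_choose_pred_mul_factorial_div {m k : ℕ} (hm : 1 ≤ m) (hk : m ≤ k) :
    ((k - 1).choose (m - 1) : ℝ) * ((m + 1)! * (k - m)! / (k + 2)!) =
      m * (m + 1) / (k * (k + 1) * (k + 2)) := by
  obtain ⟨a, rfl⟩ : ∃ a, m = a + 1 := ⟨m - 1, by omega⟩
  obtain ⟨n, rfl⟩ : ∃ n, k = a + n + 1 := ⟨k - (a + 1), by omega⟩
  rw [show a + n + 1 - 1 = a + n by omega, show a + 1 - 1 = a by omega,
    show a + n + 1 - (a + 1) = n by omega, Nat.cast_choose ℝ (Nat.le_add_right a n),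
    Nat.add_sub_cancel_left]
  simp only [Nat.factorial_succ, show a + n + 1 + 2 = a + n + 3 by omega]
  push_cast
  field_simp
  ring

/-- In the m-Yule model with species rate 1/2 and genus rate 1, the probability
that a uniformly chosen genus at time `T` has exactly `k` species converges, as `T → ∞`, to
`m(m+1)·B(k,3) = 2m(m+1)/(k(k+1)(k+2))`, where `B(a,b) = Γ(a)Γ(b)/Γ(a+b)`. -/
theorem yule_genus_size_limit (m k : ℕ) (hm : 1 ≤ m) (hk : m ≤ k) :
    Tendsto
        (fun T : ℝ =>
          (1 / (1 - Real.exp (-T))) *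
            ∫ y in (0 : ℝ)..T,
              ((k - 1).choose (m - 1) : ℝ) *
                (Real.exp (-y) * Real.exp (-(m : ℝ) * y / 2) *
                  (1 - Real.exp (-y / 2)) ^ (k - m)))
        atTop
        (𝓝 ((m : ℝ) * ((m : ℝ) + 1) *
          (Real.Gamma (k : ℝ) * Real.Gamma 3 / Real.Gamma ((k : ℝ) + 3)))) ∧
      (m : ℝ) * ((m : ℝ) + 1) *
          (Real.Gamma (k : ℝ) * Real.Gamma 3 / Real.Gamma ((k : ℝ) + 3)) =
        2 * (m : ℝ) * ((m : ℝ) + 1) / ((k : ℝ) * ((k : ℝ) + 1) * ((k : ℝ) + 2)) := by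
  have hk_pos : (0 : ℝ) < k := by exact_mod_cast hm.trans hk
  have hvalue : (m : ℝ) * (m + 1) * (Gamma k * Gamma 3 / Gamma (k + 3)) =
      2 * m * (m + 1) / (k * (k + 1) * (k + 2)) := by
    rw [Gamma_mul_Gamma_three_div_Gamma_add_three fun n h => by
      linarith [h ▸ hk_pos, n.cast_nonneg (α := ℝ)]]
    ring
  refine ⟨?_, hvalue⟩
  have hintegrand : ∀ y : ℝ,
      exp (-y) * exp (-(m : ℝ) * y / 2) * (1 - exp (-y / 2)) ^ (k - m) =
        exp (-(1 / 2 * y)) ^ (m + 1) * (1 - exp (-(1 / 2 * y))) ^ (k - m) * exp (-(1 / 2 * y)) := by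
    intro y
    have hexp : exp (-y) * exp (-(m : ℝ) * y / 2) =
        exp (-(1 / 2 * y)) ^ (m + 1) * exp (-(1 / 2 * y)) := by
      rw [← exp_nat_mul, ← exp_add, ← exp_add]
      push_cast
      ring_nf
    rw [hexp, show -y / 2 = -(1 / 2 * y) by ring]
    ring
  have hlim := tendsto_integral_comp_exp_neg_mul_mul_exp (c := 1 / 2) (by norm_num)
    (g := fun x => x ^ (m + 1) * (1 - x) ^ (k - m)) (by fun_prop)
  rw [integral_pow_mul_one_sub_pow, show m + 1 + (k - m) + 1 = k + 2 by omega] at hlim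
  simp_rw [hintegrand, intervalIntegral.integral_const_mul]
  convert tendsto_one_div_one_sub_exp_neg.mul (hlim.const_mul ((k - 1).choose (m - 1) : ℝ))
    using 2
  rw [hvalue, one_mul, mul_left_comm, cast_choose_pred_mul_factorial_div hm hk]
  ring
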